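/- arXiv:2405.10795 — 5 statements merged into one kernel-verified Lean document; each statement's English description precedes it below -/
import Mathlib

section
/- Let N ≥ 2 be an integer, θ > 0, σ > 0, α ∈ (0,1), β := 1 − α, β ≠ e^{−θ/N}, and K ≥ 0. Let X_1, …, X_N be square-integrable real random variables with means m*_1, …, m*_N satisfying m*_t − m*_{t−1} = K/N for every t ∈ {2,…,N} (linear drift), with Var(X_t) = σ²/(2θ) and Cov(X_t, X_s) = (σ²/(2θ))·e^{−(θ/N)|t−s|} for all t, s ∈ {1,…,N}. Define m̂_1 := X_1 and m̂_t := (1−α)·m̂_{t−1} + α·X_t for t ∈ {2,…,N}. Then E[(m̂_N − m*_N)²] = β^{2(N−1)}·σ²/(2θ) + (β²·((1+β)/(1−β))·(K²/N²) + α²·(σ²/(2θ))·((e^{θ/N}+β)/(e^{θ/N}−β)))·((1 − β^{2(N−1)})/(1 − β²)) − 2·(K²/N²)·((β^{N+1} − β^{2N})/α²) + α·(σ²/θ)·((e^{θ/N}−1)/(1 − β·e^{−θ/N}))·((β^{2N−1}·e^{−θ/N} − β^{N}·e^{−θ})/(β·e^{θ/N} − 1)), i.e., the upper bound of the main theorem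 holds with equality. -/
/-!
Write `m̂` as the exponential smoothing of `X`. Its mean square error splits into variance plus
squared bias, and both solve first order linear recursions. The bias `b` of the smoothed mean
against the linear drift obeys `b ← β b - β K / N`. By bilinearity of the covariance,
`Cov(m̂_n, X_s) = v ρ^(s-n) c_n` with `ρ = e^(-θ/N)`, `v = σ²/(2θ)` and `c ← β ρ c + α`, and this
feeds `Var m̂_(n+1) = β² Var m̂_n + 2 α β Cov(m̂_n, X_(n+1)) + α² v`. Solving the recursions in
closed form gives the bound of the main theorem, term by term.
-/

open MeasureTheory Real ProbabilityTheory

/-- Indexed from `0`: `expSmooth α x 0 = x 0` plays the role of `m̂_1`. -/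
noncomputable def expSmooth {E : Type*} [AddCommGroup E] [Module ℝ E] (α : ℝ) (x : ℕ → E) :
    ℕ → E
  | 0 => x 0
  | n + 1 => (1 - α) • expSmooth α x n + α • x (n + 1)

section Algebra

variable {E : Type*} [AddCommGroup E] [Module ℝ E] {α : ℝ} {n : ℕ}

theorem eq_expSmooth {x y : ℕ → E} (h0 : y 0 = x 0)
    (hs : ∀ k < n, y (k + 1) = (1 - α) • y k + α • x (k + 1)) : y n = expSmooth α x n := by
  induction n with
  | zero => exact h0
  | succ n ih => rw [hs n n.lt_succ_self, ih fun k hk => hs k (by omega), expSmooth]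

theorem expSmooth_sub_of_arithmetic {x : ℕ → ℝ} {d : ℝ} (hα : α ≠ 0)
    (hx : ∀ k < n, x (k + 1) - x k = d) :
    expSmooth α x n - x n = -d * (1 - α) * (1 - (1 - α) ^ n) / α := by
  induction n with
  | zero => simp [expSmooth]
  | succ n ih =>
    have hbias := sub_eq_iff_eq_add.1 (ih fun k hk => hx k (by omega))
    rw [expSmooth, smul_eq_mul, smul_eq_mul, hbias, ← hx n n.lt_succ_self]
    field_simp
    ring

end Algebra

section Moments

variable {Ω : Type*} [MeasurableSpace Ω] {μ : Measure Ω} {X : ℕ → Ω → ℝ} {α : ℝ} {n : ℕ}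

theorem memLp_expSmooth {p : ENNReal} (hX : ∀ k ≤ n, MemLp (X k) p μ) :
    MemLp (expSmooth α X n) p μ := by
  induction n with
  | zero => exact hX 0 le_rfl
  | succ n ih =>
    exact ((ih fun k hk => hX k (by omega)).const_smul _).add ((hX _ le_rfl).const_smul _)

theorem integral_expSmooth {m : ℕ → ℝ} (hX : ∀ k ≤ n, Integrable (X k) μ)
    (hm : ∀ k ≤ n, μ[X k] = m k) :
    μ[expSmooth α X n] = expSmooth α m n := by
  induction n with
  | zero => exact hm 0 le_rfl
  | succ n ih =>
    have hS : Integrable (expSmooth α X n) μ := memLp_one_iff_integrable.1 <|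
      memLp_expSmooth fun k hk => memLp_one_iff_integrable.2 (hX k (by omega))
    rw [expSmooth, expSmooth, integral_add' (hS.smul _) ((hX _ le_rfl).smul _)]
    simp only [Pi.smul_apply, integral_smul, hm _ le_rfl,
      ih (fun k hk => hX k (by omega)) fun k hk => hm k (by omega)]

theorem integral_sub_const_sq [IsProbabilityMeasure μ] {Y : Ω → ℝ} (hY : MemLp Y 2 μ) (c : ℝ) :
    ∫ ω, (Y ω - c) ^ 2 ∂μ = Var[Y; μ] + (μ[Y] - c) ^ 2 := by
  have h := variance_eq_sub (hY.sub (memLp_const c))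
  rw [show Y - (fun _ => c) = fun ω => Y ω - c from rfl,
    variance_sub_const hY.aestronglyMeasurable] at h
  rw [h, integral_sub (hY.integrable one_le_two) (integrable_const c)]
  simp

end Moments

section Covariance

variable {Ω : Type*} [MeasurableSpace Ω] {μ : Measure Ω} [IsFiniteMeasure μ]
  {X : ℕ → Ω → ℝ} {α : ℝ} {n : ℕ}

theorem covariance_expSmooth_succ_left {Y : Ω → ℝ} (hX : ∀ k ≤ n + 1, MemLp (X k) 2 μ)
    (hY : MemLp Y 2 μ) :
    cov[expSmooth α X (n + 1), Y; μ]
      = (1 - α) * cov[expSmooth α X n, Y; μ] + α * cov[X (n + 1), Y; μ] := by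
  have hS : MemLp (expSmooth α X n) 2 μ := memLp_expSmooth fun k hk => hX k (by omega)
  rw [expSmooth, covariance_add_left (hS.const_smul _) ((hX _ le_rfl).const_smul _) hY,
    covariance_smul_left, covariance_smul_left]

theorem variance_expSmooth_succ (hX : ∀ k ≤ n + 1, MemLp (X k) 2 μ) :
    Var[expSmooth α X (n + 1); μ]
      = (1 - α) ^ 2 * Var[expSmooth α X n; μ]
        + 2 * ((1 - α) * α) * cov[expSmooth α X n, X (n + 1); μ]
        + α ^ 2 * Var[X (n + 1); μ] := by
  have hS : MemLp (expSmooth α X n) 2 μ := memLp_expSmooth fun k hk => hX k (by omega)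
  rw [expSmooth, variance_add (hS.const_smul _) ((hX _ le_rfl).const_smul _),
    variance_smul, variance_smul, covariance_smul_left, covariance_smul_right]
  ring

variable {v ρ : ℝ}

theorem covariance_expSmooth_left_of_geometric {s : ℕ} (hX : ∀ k ≤ s, MemLp (X k) 2 μ)
    (hcov : ∀ i j, i ≤ j → j ≤ s → cov[X i, X j; μ] = v * ρ ^ (j - i))
    (hαρ : 1 - (1 - α) * ρ ≠ 0) (hn : n ≤ s) :
    cov[expSmooth α X n, X s; μ]
      = v * ρ ^ (s - n)
        * (((1 - α) * ρ) ^ n + α * (1 - ((1 - α) * ρ) ^ n) / (1 - (1 - α) * ρ)) := by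
  induction n with
  | zero => simp [expSmooth, hcov 0 s (Nat.zero_le s) le_rfl]
  | succ n ih =>
    rw [covariance_expSmooth_succ_left (fun k hk => hX k (by omega)) (hX s le_rfl),
      ih (by omega), hcov (n + 1) s hn le_rfl,
      show s - n = s - (n + 1) + 1 by omega, pow_succ]
    field_simp
    ring

theorem variance_expSmooth_of_geometric (hX : ∀ k ≤ n, MemLp (X k) 2 μ)
    (hcov : ∀ i j, i ≤ j → j ≤ n → cov[X i, X j; μ] = v * ρ ^ (j - i))
    (hαρ : 1 - (1 - α) * ρ ≠ 0) (hα : 1 - (1 - α) ^ 2 ≠ 0) (hρ : 1 - α - ρ ≠ 0) :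
    Var[expSmooth α X n; μ]
      = v * ((1 - α) ^ (2 * n)
        + α ^ 2 * ((1 + (1 - α) * ρ) / (1 - (1 - α) * ρ))
          * ((1 - (1 - α) ^ (2 * n)) / (1 - (1 - α) ^ 2))
        + 2 * α * ((1 - ρ) / (1 - (1 - α) * ρ))
          * (((1 - α) ^ (2 * n + 1) * ρ - (1 - α) ^ (n + 1) * ρ ^ (n + 1)) / (1 - α - ρ))) := by
  have hvar : ∀ k ≤ n, Var[X k; μ] = v := fun k hk => by
    rw [← covariance_self (hX k hk).aemeasurable, hcov k k le_rfl hk, Nat.sub_self, pow_zero,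
      mul_one]
  induction n with
  | zero => simp [expSmooth, hvar 0 le_rfl]
  | succ n ih =>
    rw [variance_expSmooth_succ hX, ih (fun k hk => hX k (by omega))
      (fun i j hij hj => hcov i j hij (by omega)) (fun k hk => hvar k (by omega)),
      covariance_expSmooth_left_of_geometric hX hcov hαρ n.le_succ, hvar _ le_rfl,
      Nat.add_sub_cancel_left, pow_one, mul_pow]
    field_simp
    ring

end Covariance

theorem exp_mul_abs_natCast_sub (c : ℝ) {i j : ℕ} (h : i ≤ j) :
    exp (c * |(i : ℝ) - j|) = exp c ^ (j - i) := by
  rw [← exp_nat_mul, abs_sub_comm, abs_of_nonneg (sub_nonneg.2 (Nat.cast_le.2 h)),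
    Nat.cast_sub h, mul_comm]

theorem mse_upper_bound_eq_of_linear_drift_general
    {Ω : Type*} [MeasurableSpace Ω] (μ : Measure Ω) [IsProbabilityMeasure μ]
    (N : ℕ) (hN : 2 ≤ N) (θ σ α β K : ℝ) (hθ : 0 < θ)
    (hα : α ∈ Set.Ioo (0 : ℝ) 1) (hβ : β = 1 - α)
    (hβne : β ≠ Real.exp (-(θ / N)))
    (X : ℕ → Ω → ℝ) (m : ℕ → ℝ)
    (hL2 : ∀ t, 1 ≤ t → t ≤ N → MemLp (X t) 2 μ)
    (hmean : ∀ t, 1 ≤ t → t ≤ N → ∫ ω, X t ω ∂μ = m t)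
    (hcov : ∀ t s, 1 ≤ t → t ≤ N → 1 ≤ s → s ≤ N →
      ∫ ω, (X t ω - m t) * (X s ω - m s) ∂μ
        = σ ^ 2 / (2 * θ) * Real.exp (-(θ / N) * |(t : ℝ) - (s : ℝ)|))
    (hlin : ∀ t, 2 ≤ t → t ≤ N → m t - m (t - 1) = K / N)
    (mhat : ℕ → Ω → ℝ)
    (hm1 : ∀ ω, mhat 1 ω = X 1 ω)
    (hmt : ∀ t, 2 ≤ t → t ≤ N → ∀ ω,
      mhat t ω = (1 - α) * mhat (t - 1) ω + α * X t ω) :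
    ∫ ω, (mhat N ω - m N) ^ 2 ∂μ
      = β ^ (2 * (N - 1)) * σ ^ 2 / (2 * θ)
        + (β ^ 2 * ((1 + β) / (1 - β)) * (K ^ 2 / (N : ℝ) ^ 2)
            + α ^ 2 * (σ ^ 2 / (2 * θ))
              * ((Real.exp (θ / N) + β) / (Real.exp (θ / N) - β)))
          * ((1 - β ^ (2 * (N - 1))) / (1 - β ^ 2))
        - 2 * (K ^ 2 / (N : ℝ) ^ 2) * ((β ^ (N + 1) - β ^ (2 * N)) / α ^ 2)
        + α * (σ ^ 2 / θ)
          * ((Real.exp (θ / N) - 1) / (1 - β * Real.exp (-(θ / N))))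
          * ((β ^ (2 * N - 1) * Real.exp (-(θ / N)) - β ^ N * Real.exp (-θ))
              / (β * Real.exp (θ / N) - 1)) := by
  obtain ⟨hα0, hα1⟩ := hα
  subst hβ
  obtain ⟨n, rfl⟩ : ∃ n, N = n + 1 := ⟨N - 1, by omega⟩
  set ρ := exp (-(θ / ((n + 1 : ℕ) : ℝ))) with hρ
  set Y : ℕ → Ω → ℝ := fun k => X (k + 1)
  have hY : ∀ k ≤ n, MemLp (Y k) 2 μ := fun k hk => hL2 (k + 1) (by omega) (by omega)
  have hmhat : mhat (n + 1) = expSmooth α Y n :=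
    eq_expSmooth (y := fun k => mhat (k + 1)) (funext hm1)
      fun k hk => funext (hmt (k + 2) (by omega) (by omega))
  have hcovY : ∀ i j, i ≤ j → j ≤ n → cov[Y i, Y j; μ] = σ ^ 2 / (2 * θ) * ρ ^ (j - i) := by
    intro i j hij hj
    rw [covariance, hmean _ (by omega) (by omega), hmean _ (by omega) (by omega),
      hcov _ _ (by omega) (by omega) (by omega) (by omega),
      exp_mul_abs_natCast_sub _ (Nat.add_le_add_right hij 1), Nat.add_sub_add_right]
  have hbias : μ[expSmooth α Y n] - m (n + 1)
      = -(K / ((n + 1 : ℕ) : ℝ)) * (1 - α) * (1 - (1 - α) ^ n) / α := by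
    rw [integral_expSmooth (m := fun k => m (k + 1))
      (fun k hk => (hY k hk).integrable one_le_two) fun k hk => hmean _ (by omega) (by omega)]
    exact expSmooth_sub_of_arithmetic hα0.ne' fun k hk => hlin (k + 2) (by omega) (by omega)
  have hρ1 : ρ < 1 := exp_lt_one_iff.2 (neg_lt_zero.2 (by positivity))
  have hρ0 : 0 < ρ := exp_pos _
  have hαρ : 1 - (1 - α) * ρ ≠ 0 := by nlinarith
  have hα2 : 1 - (1 - α) ^ 2 ≠ 0 := by nlinarith
  have hE : exp (θ / ((n + 1 : ℕ) : ℝ)) = ρ⁻¹ := by rw [hρ, exp_neg, inv_inv]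
  have hθρ : exp (-θ) = ρ ^ (n + 1) := by
    rw [hρ, ← exp_nat_mul]
    field_simp
  rw [hmhat, integral_sub_const_sq (memLp_expSmooth hY), hbias,
    variance_expSmooth_of_geometric hY hcovY hαρ hα2 (sub_ne_zero.2 hβne), hE, hθρ,
    Nat.add_sub_cancel, show 2 * (n + 1) - 1 = 2 * n + 1 by omega, sub_sub_cancel]
  field_simp
  ring

/-- Sharpness of the main theorem: for a linear drift (increments exactly `K/N`)
the upper bound on the mean square error of the exponential smoothing estimator
holds with equality. -/
theorem mse_upper_bound_eq_of_linear_drift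
    {Ω : Type*} [MeasurableSpace Ω] (μ : Measure Ω) [IsProbabilityMeasure μ]
    (N : ℕ) (hN : 2 ≤ N) (θ σ α β K : ℝ) (hθ : 0 < θ) (hσ : 0 < σ)
    (hα : α ∈ Set.Ioo (0 : ℝ) 1) (hβ : β = 1 - α) (hK : 0 ≤ K)
    (hβne : β ≠ Real.exp (-(θ / N)))
    (X : ℕ → Ω → ℝ) (m : ℕ → ℝ)
    (hL2 : ∀ t, 1 ≤ t → t ≤ N → MemLp (X t) 2 μ)
    (hmean : ∀ t, 1 ≤ t → t ≤ N → ∫ ω, X t ω ∂μ = m t)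
    (hcov : ∀ t s, 1 ≤ t → t ≤ N → 1 ≤ s → s ≤ N →
      ∫ ω, (X t ω - m t) * (X s ω - m s) ∂μ
        = σ ^ 2 / (2 * θ) * Real.exp (-(θ / N) * |(t : ℝ) - (s : ℝ)|))
    (hlin : ∀ t, 2 ≤ t → t ≤ N → m t - m (t - 1) = K / N)
    (mhat : ℕ → Ω → ℝ)
    (hm1 : ∀ ω, mhat 1 ω = X 1 ω)
    (hmt : ∀ t, 2 ≤ t → t ≤ N → ∀ ω,
      mhat t ω = (1 - α) * mhat (t - 1) ω + α * X t ω) :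
    ∫ ω, (mhat N ω - m N) ^ 2 ∂μ
      = β ^ (2 * (N - 1)) * σ ^ 2 / (2 * θ)
        + (β ^ 2 * ((1 + β) / (1 - β)) * (K ^ 2 / (N : ℝ) ^ 2)
            + α ^ 2 * (σ ^ 2 / (2 * θ))
              * ((Real.exp (θ / N) + β) / (Real.exp (θ / N) - β)))
          * ((1 - β ^ (2 * (N - 1))) / (1 - β ^ 2))
        - 2 * (K ^ 2 / (N : ℝ) ^ 2) * ((β ^ (N + 1) - β ^ (2 * N)) / α ^ 2)
        + α * (σ ^ 2 / θ)
          * ((Real.exp (θ / N) - 1) / (1 - β * Real.exp (-(θ / N))))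
          * ((β ^ (2 * N - 1) * Real.exp (-(θ / N)) - β ^ N * Real.exp (-θ))
              / (β * Real.exp (θ / N) - 1)) :=
  mse_upper_bound_eq_of_linear_drift_general μ N hN θ σ α β K hθ hα hβ hβne X m hL2 hmean hcov hlin
    mhat hm1 hmt
end

section
/- Let N ≥ 2 be an integer, θ > 0, σ > 0, and m* ∈ ℝ. Let X_1, …, X_N be square-integrable real random variables with E[X_i] = m* for all i and Cov(X_i, X_j) = (σ²/(2θ))·e^{−(θ/N)|i−j|} for all i, j ∈ {1,…,N}; let C denote this covariance matrix, A = (a_{ij}) its inverse, and define M̂ := (∑_{i,j=1}^{N} a_{ij}·X_j) / (∑_{i,j=1}^{N} a_{ij}). Then E[(M̂ − m*)²] = σ²·(1 − e^{−2θ/N}) / (2θ·(N + (N−2)·e^{−2θ/N} − 2(N−1)·e^{−θ/N})). -/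
/-!
The maximum likelihood estimator is the generalized least squares estimator
`M̂ = wᵀX / wᵀ1` with `w = Aᵀ1`. Its error is `wᵀ(X - m*) / wᵀ1`, so its mean square error is
`wᵀCw / (wᵀ1)² = 1ᵀ(AC)Aᵀ1 / (1ᵀA1)² = 1 / 1ᵀA1`; only `AC = 1` is needed, not symmetry.

For the Ornstein–Uhlenbeck covariance, `C = c • K` with `c = σ²/(2θ)` and `K = (r^|i-j|)` the
Kac–Murdock–Szegő matrix for `r = e^{-θ/N}`. Its inverse is `(1 - r²)⁻¹` times the tridiagonal
matrix with diagonal `(1, 1 + r², …, 1 + r², 1)` and off-diagonal `-r`, whose entries sum to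
`N(1 - r)² + 2r(1 - r)`. Then `1 / 1ᵀA1 = c(1 - r²) / (N(1 - r)² + 2r(1 - r))`, which is the
claimed formula.
-/

open MeasureTheory

section PowDist

variable {M : Type*} [Monoid M] (r : M) {j k : ℕ}

lemma pow_dist_eq_mul_pow_dist_succ_of_lt (h : j < k) :
    r ^ Nat.dist j k = r * r ^ Nat.dist (j + 1) k := by
  rw [Nat.dist_eq_sub_of_le h.le, Nat.dist_eq_sub_of_le h, ← pow_succ']
  congr 1
  omega

lemma pow_dist_succ_eq_mul_pow_dist_of_le (h : k ≤ j) :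
    r ^ Nat.dist (j + 1) k = r * r ^ Nat.dist j k := by
  rw [Nat.dist_eq_sub_of_le_right h, Nat.dist_eq_sub_of_le_right (by omega), ← pow_succ']
  congr 1
  omega

end PowDist

namespace Matrix

variable {R : Type*} [CommRing R]

/-- The Kac–Murdock–Szegő matrix `(r ^ |i - j|)`. -/
def kms (N : ℕ) (r : R) : Matrix (Fin N) (Fin N) R :=
  of fun i j => r ^ Nat.dist i j

-- Indexed by `ℕ` so that row sums can be computed over `Finset.range N`.
def kmsTridiagEntry (N : ℕ) (r : R) (i j : ℕ) : R :=
  (if j = i then (if i = 0 ∨ i + 1 = N then 1 else 1 + r ^ 2) else 0)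
    - (if j = i + 1 then r else 0) - (if j + 1 = i then r else 0)

def kmsTridiag (N : ℕ) (r : R) : Matrix (Fin N) (Fin N) R :=
  of fun i j => kmsTridiagEntry N r i j

lemma sum_range_kmsTridiagEntry_mul {N i : ℕ} (hi : i < N) (r : R) (g : ℕ → R) :
    ∑ j ∈ Finset.range N, kmsTridiagEntry N r i j * g j
      = (if i = 0 ∨ i + 1 = N then 1 else 1 + r ^ 2) * g i
        - (if i + 1 < N then r * g (i + 1) else 0) - (if 0 < i then r * g (i - 1) else 0) := by
  simp only [kmsTridiagEntry, sub_mul, ite_mul, zero_mul, Finset.sum_sub_distrib,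
    Finset.sum_ite_eq', Finset.mem_range, if_pos hi]
  congr 1
  cases i with
  | zero => simp
  | succ i => simp [Finset.sum_ite_eq', show i < N by omega]

/-- Away from `k`, the sequence `r ^ |j - k|` is geometric with ratio `r` on either side, which
kills the row. -/
lemma kmsTridiag_row_pow_dist {N i k : ℕ} (hN : 2 ≤ N) (hi : i < N) (hk : k < N) (r : R) :
    (if i = 0 ∨ i + 1 = N then 1 else 1 + r ^ 2) * r ^ Nat.dist i k
        - (if i + 1 < N then r * r ^ Nat.dist (i + 1) k else 0)
        - (if 0 < i then r * r ^ Nat.dist (i - 1) k else 0)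
      = if i = k then 1 - r ^ 2 else 0 := by
  obtain rfl | ⟨i, rfl⟩ : i = 0 ∨ ∃ i', i = i' + 1 := by cases i <;> simp
  · rcases Nat.eq_zero_or_pos k with rfl | hk0
    · rw [pow_dist_succ_eq_mul_pow_dist_of_le r le_rfl]
      split_ifs <;> first | omega | simp; ring
    · rw [pow_dist_eq_mul_pow_dist_succ_of_lt r hk0]
      split_ifs <;> first | omega | ring
  · simp only [Nat.add_sub_cancel, Nat.succ_ne_zero, false_or, Nat.succ_pos, if_true]
    rcases Nat.lt_trichotomy (i + 1) k with hlt | rfl | hgt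
    · rw [pow_dist_eq_mul_pow_dist_succ_of_lt r (by omega : i < k),
        pow_dist_eq_mul_pow_dist_succ_of_lt r hlt]
      split_ifs <;> first | omega | ring
    · rw [pow_dist_succ_eq_mul_pow_dist_of_le r le_rfl,
        pow_dist_eq_mul_pow_dist_succ_of_lt r (Nat.lt_succ_self i), Nat.dist_self]
      split_ifs <;> first | omega | ring
    · rw [pow_dist_succ_eq_mul_pow_dist_of_le r (by omega : k ≤ i + 1),
        pow_dist_succ_eq_mul_pow_dist_of_le r (by omega : k ≤ i)]
      split_ifs <;> first | omega | ring

theorem kmsTridiag_mul_kms {N : ℕ} (hN : 2 ≤ N) (r : R) :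
    kmsTridiag N r * kms N r = (1 - r ^ 2) • (1 : Matrix (Fin N) (Fin N) R) := by
  ext i k
  rw [mul_apply, smul_apply, one_apply]
  simp only [kmsTridiag, kms, of_apply]
  rw [Fin.sum_univ_eq_sum_range (fun j => kmsTridiagEntry N r i j * r ^ Nat.dist j k),
    sum_range_kmsTridiagEntry_mul i.isLt, kmsTridiag_row_pow_dist hN i.isLt k.isLt]
  simp [Fin.ext_iff]

theorem sum_kmsTridiag {N : ℕ} (hN : 2 ≤ N) (r : R) :
    ∑ i, ∑ j, kmsTridiag N r i j = N * (1 - r) ^ 2 + 2 * r * (1 - r) := by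
  have hrow : ∀ i ∈ Finset.range N, ∑ j ∈ Finset.range N, kmsTridiagEntry N r i j
      = (1 - r) ^ 2
        + ((if i = 0 then r * (1 - r) else 0) + (if i = N - 1 then r * (1 - r) else 0)) := by
    intro i hi
    rw [Finset.mem_range] at hi
    have := sum_range_kmsTridiagEntry_mul hi r 1
    simp only [Pi.one_apply, mul_one] at this
    rw [this]
    split_ifs <;> first | omega | ring
  simp only [kmsTridiag, of_apply]
  rw [Finset.sum_congr rfl fun (i : Fin N) _ => Fin.sum_univ_eq_sum_range (kmsTridiagEntry N r i) N,
    Fin.sum_univ_eq_sum_range (fun i => ∑ j ∈ Finset.range N, kmsTridiagEntry N r i j),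
    Finset.sum_congr rfl hrow, Finset.sum_add_distrib, Finset.sum_add_distrib,
    Finset.sum_ite_eq', Finset.sum_ite_eq', Finset.sum_const, Finset.card_range, nsmul_eq_mul,
    if_pos (Finset.mem_range.2 (by omega)), if_pos (Finset.mem_range.2 (by omega))]
  ring

end Matrix

section SecondMoment

open Matrix

variable {Ω ι : Type*} [MeasurableSpace Ω] {μ : Measure Ω} [Fintype ι]

theorem integral_sq_dotProduct {Y : ι → Ω → ℝ} (hY : ∀ i, MemLp (Y i) 2 μ)
    {C : Matrix ι ι ℝ} (hC : ∀ i j, ∫ ω, Y i ω * Y j ω ∂μ = C i j) (w : ι → ℝ) :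
    ∫ ω, (w ⬝ᵥ fun i => Y i ω) ^ 2 ∂μ = w ⬝ᵥ C *ᵥ w := by
  have hint : ∀ i j, Integrable (fun ω => w i * w j * (Y i ω * Y j ω)) μ := fun i j =>
    ((hY i).integrable_mul (hY j)).const_mul _
  have hsq : ∀ ω, (w ⬝ᵥ fun i => Y i ω) ^ 2 = ∑ i, ∑ j, w i * w j * (Y i ω * Y j ω) := by
    intro ω
    simp only [dotProduct, sq, Finset.sum_mul_sum]
    exact Finset.sum_congr rfl fun i _ => Finset.sum_congr rfl fun j _ => by ring
  simp only [hsq]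
  rw [integral_finsetSum _ fun i _ => integrable_finsetSum _ fun j _ => hint i j]
  simp only [integral_finsetSum _ fun j _ => hint _ j, integral_const_mul, hC, dotProduct,
    mulVec, Finset.mul_sum]
  exact Finset.sum_congr rfl fun i _ => Finset.sum_congr rfl fun j _ => by ring

theorem integral_sq_gls_sub_eq_inv [DecidableEq ι] [IsFiniteMeasure μ] {X : ι → Ω → ℝ}
    (hX : ∀ i, MemLp (X i) 2 μ) {m : ℝ} {C A : Matrix ι ι ℝ}
    (hcov : ∀ i j, ∫ ω, (X i ω - m) * (X j ω - m) ∂μ = C i j) (hAC : A * C = 1)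
    (hS : ∑ i, ∑ j, A i j ≠ 0) :
    ∫ ω, ((∑ i, ∑ j, A i j * X j ω) / (∑ i, ∑ j, A i j) - m) ^ 2 ∂μ
      = (∑ i, ∑ j, A i j)⁻¹ := by
  set S := ∑ i, ∑ j, A i j
  set w : ι → ℝ := 1 ᵥ* A
  have herror : ∀ ω, (∑ i, ∑ j, A i j * X j ω) / S - m = (w ⬝ᵥ fun j => X j ω - m) / S := by
    intro ω
    rw [eq_div_iff hS, sub_mul, div_mul_cancel₀ _ hS]
    simp only [w, S, dotProduct, vecMul, Pi.one_apply, one_mul, mul_sub, Finset.sum_sub_distrib,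
      Finset.sum_mul]
    rw [Finset.sum_comm (f := fun i j => A i j * X j ω), Finset.mul_sum]
    congr 1
    rw [Finset.sum_comm]
    simp only [mul_comm m, Finset.sum_mul]
  have hquad : w ⬝ᵥ C *ᵥ w = S := by
    rw [dotProduct_mulVec, vecMul_vecMul, hAC, vecMul_one]
    simp only [w, dotProduct, vecMul, Pi.one_apply, one_mul, S]
    exact Finset.sum_comm
  simp only [herror, div_pow]
  rw [integral_div, integral_sq_dotProduct (Y := fun i ω => X i ω - m)
    (fun i => (hX i).sub (memLp_const m)) hcov, hquad]
  field_simp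

end SecondMoment

theorem mse_mle_ornstein_uhlenbeck_general
    {Ω : Type*} [MeasurableSpace Ω] (μ : Measure Ω) [IsProbabilityMeasure μ]
    (N : ℕ) (hN : 2 ≤ N) (θ σ mstar : ℝ) (hθ : 0 < θ) (hσ : 0 < σ)
    (X : Fin N → Ω → ℝ)
    (hL2 : ∀ i, MemLp (X i) 2 μ)
    (C A : Matrix (Fin N) (Fin N) ℝ)
    (hC : ∀ i j, C i j
      = σ ^ 2 / (2 * θ) * Real.exp (-(θ / N) * (Nat.dist i.val j.val : ℝ)))
    (hcov : ∀ i j, ∫ ω, (X i ω - mstar) * (X j ω - mstar) ∂μ = C i j)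
    (hA : A = C⁻¹) :
    ∫ ω, ((∑ i, ∑ j, A i j * X j ω) / (∑ i, ∑ j, A i j) - mstar) ^ 2 ∂μ
      = σ ^ 2 * (1 - Real.exp (-(2 * θ / N)))
        / (2 * θ * ((N : ℝ) + ((N : ℝ) - 2) * Real.exp (-(2 * θ / N))
            - 2 * ((N : ℝ) - 1) * Real.exp (-(θ / N)))) := by
  set r := Real.exp (-(θ / N))
  set c := σ ^ 2 / (2 * θ) with hc
  have hr0 : 0 < r := Real.exp_pos _
  have hr1 : 0 < 1 - r := sub_pos.2 (Real.exp_lt_one_iff.2 (neg_lt_zero.2 (by positivity)))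
  have hd : c * (1 - r ^ 2) ≠ 0 := mul_ne_zero (by positivity) (by nlinarith)
  have hT : (N : ℝ) * (1 - r) ^ 2 + 2 * r * (1 - r) ≠ 0 := by positivity
  have hCK : C = c • Matrix.kms N r := by
    ext i j
    rw [hC, Matrix.smul_apply, Matrix.kms, Matrix.of_apply, smul_eq_mul, ← Real.exp_nat_mul,
      mul_comm _ (-(θ / N))]
  have hBC : (c * (1 - r ^ 2))⁻¹ • Matrix.kmsTridiag N r * C = 1 := by
    rw [hCK, smul_mul_smul_comm, Matrix.kmsTridiag_mul_kms hN, smul_smul, mul_assoc,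
      inv_mul_cancel₀ hd, one_smul]
  have hAB : A = (c * (1 - r ^ 2))⁻¹ • Matrix.kmsTridiag N r := by
    rw [hA, Matrix.inv_eq_left_inv hBC]
  have hS : ∑ i, ∑ j, A i j = (c * (1 - r ^ 2))⁻¹ * (N * (1 - r) ^ 2 + 2 * r * (1 - r)) := by
    simp only [hAB, Matrix.smul_apply, smul_eq_mul, ← Finset.mul_sum, Matrix.sum_kmsTridiag hN]
  have hS0 : ∑ i, ∑ j, A i j ≠ 0 := hS ▸ mul_ne_zero (inv_ne_zero hd) hT
  rw [integral_sq_gls_sub_eq_inv hL2 hcov (by rw [hAB, hBC]) hS0, hS,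
    show Real.exp (-(2 * θ / N)) = r ^ 2 by rw [← Real.exp_nat_mul]; ring_nf,
    show (N : ℝ) + (N - 2) * r ^ 2 - 2 * (N - 1) * r = N * (1 - r) ^ 2 + 2 * r * (1 - r) by ring,
    hc]
  field_simp

/-- Exact mean square error of the global maximum likelihood estimator of a
constant drift perturbed by a stationary Ornstein–Uhlenbeck process. -/
theorem mse_mle_ornstein_uhlenbeck
    {Ω : Type*} [MeasurableSpace Ω] (μ : Measure Ω) [IsProbabilityMeasure μ]
    (N : ℕ) (hN : 2 ≤ N) (θ σ mstar : ℝ) (hθ : 0 < θ) (hσ : 0 < σ)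
    (X : Fin N → Ω → ℝ)
    (hL2 : ∀ i, MemLp (X i) 2 μ)
    (hmean : ∀ i, ∫ ω, X i ω ∂μ = mstar)
    (C A : Matrix (Fin N) (Fin N) ℝ)
    (hC : ∀ i j, C i j
      = σ ^ 2 / (2 * θ) * Real.exp (-(θ / N) * (Nat.dist i.val j.val : ℝ)))
    (hcov : ∀ i j, ∫ ω, (X i ω - mstar) * (X j ω - mstar) ∂μ = C i j)
    (hA : A = C⁻¹) :
    ∫ ω, ((∑ i, ∑ j, A i j * X j ω) / (∑ i, ∑ j, A i j) - mstar) ^ 2 ∂μ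
      = σ ^ 2 * (1 - Real.exp (-(2 * θ / N)))
        / (2 * θ * ((N : ℝ) + ((N : ℝ) - 2) * Real.exp (-(2 * θ / N))
            - 2 * ((N : ℝ) - 1) * Real.exp (-(θ / N)))) :=
  mse_mle_ornstein_uhlenbeck_general μ N hN θ σ mstar hθ hσ X hL2 C A hC hcov hA
end

section
/- Let N ≥ 2 be an integer, θ > 0, σ > 0, α ∈ (0,1), β := 1 − α, and γ(k) := (σ²/(2θ))·e^{−(θ/N)·k}. Let X_1, …, X_N be square-integrable real random variables with E[X_t] = m*_t for real numbers m*_1, …, m*_N, Var(X_t) = σ²/(2θ), and Cov(X_t, X_s) = (σ²/(2θ))·e^{−(θ/N)|t−s|} for all t, s ∈ {1,…,N}. Define m̂_1 := X_1, m̂_t := (1−α)·m̂_{t−1} + α·X_t for t ∈ {2,…,N}, set D_t := E[(m̂_t − m*_t)²] and K_j := m*_j − m*_{j−1}. Then for every t ∈ {2,…,N}: D_t = β²·(D_{t−1} + K_t² + 2·K_t·∑_{j=2}^{t−1} β^{t−j}·K_j) + α²·σ²/(2θ) + 2·α·β^{t}·γ(t−1) + 2·α²·∑_{k=1}^{t−1}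 β^{k}·γ(k). -/
open MeasureTheory Finset

/-!
With `e_t := m̂_t − m*_t` and `Z_t := X_t − m*_t` the smoothing step reads
`e_t = β e_{t−1} + α Z_t − β K_t`, so squaring and integrating expresses `D_t` through `D_{t−1}`,
`E[e_{t−1}]` and `E[e_{t−1} Z_t]`. For fixed `t`, both `E[e_s]` and `E[e_s Z_t]` satisfy
first-order linear recurrences in `s` (the latter because `Cov(X_i, X_j)` depends only on `j − i`),
and unrolling them produces the two sums of the recursion.
-/

lemma mul_sum_Icc_pow_sub {R : Type*} [CommSemiring R] (β : R) (f : ℕ → R) (a s : ℕ) :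
    β * ∑ j ∈ Icc a s, β ^ (s - j) * f j = ∑ j ∈ Icc a s, β ^ (s + 1 - j) * f j := by
  rw [mul_sum]
  refine sum_congr rfl fun j hj => ?_
  rw [Nat.sub_add_comm (mem_Icc.1 hj).2, pow_succ]
  ring

lemma sum_Icc_reflect {M : Type*} [AddCommMonoid M] (f : ℕ → M) (s : ℕ) :
    ∑ j ∈ Icc 2 s, f (s + 1 - j) = ∑ k ∈ Icc 1 (s - 1), f k := by
  refine sum_nbij' (fun j => s + 1 - j) (fun k => s + 1 - k) ?_ ?_ ?_ ?_ ?_ <;>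
    intros <;> simp_all only [mem_Icc] <;> omega

lemma eq_pow_mul_add_sum_of_recurrence {R : Type*} [CommSemiring R] {n : ℕ} {β : R}
    {a f : ℕ → R} (h : ∀ s, 1 ≤ s → s < n → a (s + 1) = β * a s + f (s + 1)) :
    ∀ s, 1 ≤ s → s ≤ n → a s = β ^ (s - 1) * a 1 + ∑ j ∈ Icc 2 s, β ^ (s - j) * f j := by
  intro s hs
  induction s, hs using Nat.le_induction with
  | base => simp
  | succ s hs ih =>
    intro hsn
    rw [h s hs hsn, ih (by omega), sum_Icc_succ_top (by omega), mul_add, ← mul_assoc, ← pow_succ',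
      mul_sum_Icc_pow_sub, Nat.sub_add_cancel hs, Nat.sub_self, pow_zero, one_mul,
      Nat.add_sub_cancel]
    ring

section Moments
variable {Ω : Type*} [MeasurableSpace Ω] {μ : Measure Ω} [IsProbabilityMeasure μ] {A Z W : Ω → ℝ}

lemma integral_sub_eq_zero_of_integral_eq (hA : Integrable A μ) {a : ℝ} (h : ∫ ω, A ω ∂μ = a) :
    ∫ ω, A ω - a ∂μ = 0 := by
  rw [integral_sub hA (integrable_const a), h, integral_const]
  simp

lemma integral_affine (hA : Integrable A μ) (hZ : Integrable Z μ) (a b c : ℝ) :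
    ∫ ω, a * A ω + b * Z ω + c ∂μ = a * ∫ ω, A ω ∂μ + b * ∫ ω, Z ω ∂μ + c := by
  rw [integral_add, integral_add]
  · simp only [integral_const_mul, integral_const, probReal_univ, one_smul]
  all_goals fun_prop

lemma integral_affine_mul (hA : MemLp A 2 μ) (hZ : MemLp Z 2 μ) (hW : MemLp W 2 μ) (a b c : ℝ) :
    ∫ ω, (a * A ω + b * Z ω + c) * W ω ∂μ
      = a * ∫ ω, A ω * W ω ∂μ + b * ∫ ω, Z ω * W ω ∂μ + c * ∫ ω, W ω ∂μ := by
  have hAW : Integrable (fun ω => A ω * W ω) μ := hA.integrable_mul hW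
  have hZW : Integrable (fun ω => Z ω * W ω) μ := hZ.integrable_mul hW
  have hW1 := hW.integrable one_le_two
  simp_rw [add_mul, mul_assoc]
  rw [integral_add, integral_add]
  · simp only [integral_const_mul]
  all_goals fun_prop

lemma integral_affine_sq (hA : MemLp A 2 μ) (hZ : MemLp Z 2 μ) (a b c : ℝ) :
    ∫ ω, (a * A ω + b * Z ω + c) ^ 2 ∂μ
      = a ^ 2 * ∫ ω, A ω ^ 2 ∂μ + b ^ 2 * ∫ ω, Z ω ^ 2 ∂μ + c ^ 2
        + 2 * a * b * ∫ ω, A ω * Z ω ∂μ + 2 * a * c * ∫ ω, A ω ∂μ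
        + 2 * b * c * ∫ ω, Z ω ∂μ := by
  have hA1 := hA.integrable one_le_two
  have hZ1 := hZ.integrable one_le_two
  have hAZ : Integrable (fun ω => A ω * Z ω) μ := hA.integrable_mul hZ
  have hA2 := hA.integrable_sq
  have hZ2 := hZ.integrable_sq
  have hexpand : (fun ω => (a * A ω + b * Z ω + c) ^ 2) = fun ω =>
      a ^ 2 * A ω ^ 2 + b ^ 2 * Z ω ^ 2 + c ^ 2 + 2 * a * b * (A ω * Z ω)
        + 2 * a * c * A ω + 2 * b * c * Z ω := by
    ext ω; ring
  rw [hexpand, integral_add, integral_add, integral_add, integral_add, integral_add]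
  · simp only [integral_const_mul, integral_const, probReal_univ, one_smul]
  all_goals fun_prop

end Moments

lemma smoothing_error_succ {Ω : Type*} {N : ℕ} {α β : ℝ} {X mhat : ℕ → Ω → ℝ} {m : ℕ → ℝ}
    (hαβ : α + β = 1)
    (hmt : ∀ s, 1 ≤ s → s < N → ∀ ω, mhat (s + 1) ω = β * mhat s ω + α * X (s + 1) ω)
    {s : ℕ} (hs : 1 ≤ s) (hsN : s < N) (ω : Ω) :
    mhat (s + 1) ω - m (s + 1)
      = β * (mhat s ω - m s) + α * (X (s + 1) ω - m (s + 1)) + -β * (m (s + 1) - m s) := by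
  rw [hmt s hs hsN ω]
  linear_combination m (s + 1) * hαβ

section Smoothing
variable {Ω : Type*} [MeasurableSpace Ω] {μ : Measure Ω} {N : ℕ} {α β : ℝ}
  {X mhat : ℕ → Ω → ℝ} {m : ℕ → ℝ}
  (hL2 : ∀ t, 1 ≤ t → t ≤ N → MemLp (X t) 2 μ)
  (hm1 : ∀ ω, mhat 1 ω = X 1 ω)
  (hmt : ∀ s, 1 ≤ s → s < N → ∀ ω, mhat (s + 1) ω = β * mhat s ω + α * X (s + 1) ω)
include hL2 hm1 hmt

lemma memLp_smoothing : ∀ t, 1 ≤ t → t ≤ N → MemLp (mhat t) 2 μ := by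
  intro t ht
  induction t, ht using Nat.le_induction with
  | base => exact fun hN => (funext hm1 : mhat 1 = X 1) ▸ hL2 1 le_rfl hN
  | succ s hs ih =>
    intro hsN
    rw [show mhat (s + 1) = fun ω => β * mhat s ω + α * X (s + 1) ω from funext (hmt s hs hsN)]
    exact ((ih (by omega)).const_mul β).add ((hL2 (s + 1) (by omega) hsN).const_mul α)

variable [IsProbabilityMeasure μ] (hαβ : α + β = 1)
  (hmean : ∀ t, 1 ≤ t → t ≤ N → ∫ ω, X t ω ∂μ = m t)
include hαβ hmean

lemma integral_smoothing_error :
    ∀ s, 1 ≤ s → s ≤ N → ∫ ω, mhat s ω - m s ∂μ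
      = -∑ j ∈ Icc 2 s, β ^ (s + 1 - j) * (m j - m (j - 1)) := by
  have hZ0 t (h1 : 1 ≤ t) (h2 : t ≤ N) : ∫ ω, X t ω - m t ∂μ = 0 :=
    integral_sub_eq_zero_of_integral_eq ((hL2 t h1 h2).integrable one_le_two) (hmean t h1 h2)
  have hrec : ∀ s, 1 ≤ s → s < N → ∫ ω, mhat (s + 1) ω - m (s + 1) ∂μ
      = β * ∫ ω, mhat s ω - m s ∂μ + -β * (m (s + 1) - m s) := by
    intro s hs hsN
    simp_rw [smoothing_error_succ hαβ hmt hs hsN]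
    rw [integral_affine, hZ0 (s + 1) (by omega) hsN, mul_zero, add_zero]
    · exact ((memLp_smoothing hL2 hm1 hmt s hs hsN.le).integrable one_le_two).sub
        (integrable_const _)
    · exact ((hL2 (s + 1) (by omega) hsN).integrable one_le_two).sub (integrable_const _)
  intro s hs hsN
  refine (eq_pow_mul_add_sum_of_recurrence (a := fun s => ∫ ω, mhat s ω - m s ∂μ)
    (f := fun j => -β * (m j - m (j - 1))) hrec s hs hsN).trans ?_
  rw [← mul_sum_Icc_pow_sub, mul_sum, ← sum_neg_distrib]
  simp_rw [hm1, hZ0 1 le_rfl (by omega)]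
  simp only [mul_zero, zero_add]
  exact sum_congr rfl fun j _ => by ring

lemma integral_smoothing_error_succ_sq {s : ℕ} (hs : 1 ≤ s) (hsN : s < N) :
    ∫ ω, (mhat (s + 1) ω - m (s + 1)) ^ 2 ∂μ
      = β ^ 2 * ∫ ω, (mhat s ω - m s) ^ 2 ∂μ + α ^ 2 * ∫ ω, (X (s + 1) ω - m (s + 1)) ^ 2 ∂μ
        + β ^ 2 * (m (s + 1) - m s) ^ 2
        + 2 * α * β * ∫ ω, (mhat s ω - m s) * (X (s + 1) ω - m (s + 1)) ∂μ
        - 2 * β ^ 2 * (m (s + 1) - m s) * ∫ ω, mhat s ω - m s ∂μ := by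
  have he : MemLp (fun ω => mhat s ω - m s) 2 μ :=
    (memLp_smoothing hL2 hm1 hmt s hs hsN.le).sub (memLp_const _)
  have hZ : MemLp (fun ω => X (s + 1) ω - m (s + 1)) 2 μ :=
    (hL2 (s + 1) (by omega) hsN).sub (memLp_const _)
  simp_rw [smoothing_error_succ hαβ hmt hs hsN]
  rw [integral_affine_sq he hZ, integral_sub_eq_zero_of_integral_eq
    ((hL2 (s + 1) (by omega) hsN).integrable one_le_two) (hmean (s + 1) (by omega) hsN)]
  ring

variable {c : ℕ → ℝ}
  (hcov : ∀ i j, 1 ≤ i → i ≤ j → j ≤ N → ∫ ω, (X i ω - m i) * (X j ω - m j) ∂μ = c (j - i))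
include hcov

lemma integral_smoothing_error_mul {t : ℕ} (htN : t ≤ N) :
    ∀ s, 1 ≤ s → s < t → ∫ ω, (mhat s ω - m s) * (X t ω - m t) ∂μ
      = β ^ (s - 1) * c (t - 1) + α * ∑ j ∈ Icc 2 s, β ^ (s - j) * c (t - j) := by
  have hZ t (h1 : 1 ≤ t) (h2 : t ≤ N) : MemLp (fun ω => X t ω - m t) 2 μ :=
    (hL2 t h1 h2).sub (memLp_const _)
  have hrec : ∀ s, 1 ≤ s → s < t - 1 → ∫ ω, (mhat (s + 1) ω - m (s + 1)) * (X t ω - m t) ∂μ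
      = β * ∫ ω, (mhat s ω - m s) * (X t ω - m t) ∂μ + α * c (t - (s + 1)) := by
    intro s hs hst
    have he : MemLp (fun ω => mhat s ω - m s) 2 μ :=
      (memLp_smoothing hL2 hm1 hmt s hs (by omega)).sub (memLp_const _)
    simp_rw [smoothing_error_succ hαβ hmt hs (by omega : s < N)]
    rw [integral_affine_mul he (hZ (s + 1) (by omega) (by omega)) (hZ t (by omega) htN),
      hcov (s + 1) t (by omega) (by omega) htN,
      integral_sub_eq_zero_of_integral_eq ((hL2 t (by omega) htN).integrable one_le_two)
        (hmean t (by omega) htN), mul_zero, add_zero]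
  intro s hs hst
  refine (eq_pow_mul_add_sum_of_recurrence
    (a := fun s => ∫ ω, (mhat s ω - m s) * (X t ω - m t) ∂μ)
    (f := fun j => α * c (t - j)) hrec s hs (by omega)).trans ?_
  rw [mul_sum]
  simp_rw [hm1, hcov 1 t le_rfl (by omega) htN]
  exact congrArg _ (sum_congr rfl fun j _ => by ring)

lemma mul_integral_smoothing_error_mul_succ {s : ℕ} (hs : 1 ≤ s) (hsN : s < N) :
    β * ∫ ω, (mhat s ω - m s) * (X (s + 1) ω - m (s + 1)) ∂μ
      = β ^ (s + 1) * c s + α * ∑ k ∈ Icc 1 s, β ^ k * c k := by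
  rw [integral_smoothing_error_mul hL2 hm1 hmt hαβ hmean hcov (t := s + 1) hsN s hs
      (Nat.lt_add_one s),
    Nat.add_sub_cancel, mul_add, mul_left_comm β α, mul_sum_Icc_pow_sub,
    show ∑ j ∈ Icc 2 s, β ^ (s + 1 - j) * c (s + 1 - j) = ∑ k ∈ Icc 1 (s - 1), β ^ k * c k from
      sum_Icc_reflect (fun k => β ^ k * c k) s]
  obtain ⟨r, rfl⟩ : ∃ r, s = r + 1 := ⟨s - 1, by omega⟩
  rw [sum_Icc_succ_top (by omega), Nat.add_sub_cancel]
  linear_combination (-β ^ (r + 1) * c (r + 1)) * hαβ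

end Smoothing

theorem mse_recursion_general
    {Ω : Type*} [MeasurableSpace Ω] (μ : Measure Ω) [IsProbabilityMeasure μ]
    (N : ℕ) (θ σ α β : ℝ)
    (hβ : β = 1 - α)
    (γ : ℕ → ℝ) (hγ : ∀ k, γ k = σ ^ 2 / (2 * θ) * Real.exp (-(θ / N) * (k : ℝ)))
    (X : ℕ → Ω → ℝ) (m : ℕ → ℝ)
    (hL2 : ∀ t, 1 ≤ t → t ≤ N → MemLp (X t) 2 μ)
    (hmean : ∀ t, 1 ≤ t → t ≤ N → ∫ ω, X t ω ∂μ = m t)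
    (hcov : ∀ t s, 1 ≤ t → t ≤ N → 1 ≤ s → s ≤ N →
      ∫ ω, (X t ω - m t) * (X s ω - m s) ∂μ
        = σ ^ 2 / (2 * θ) * Real.exp (-(θ / N) * |(t : ℝ) - (s : ℝ)|))
    (mhat : ℕ → Ω → ℝ)
    (hm1 : ∀ ω, mhat 1 ω = X 1 ω)
    (hmt : ∀ t, 2 ≤ t → t ≤ N → ∀ ω,
      mhat t ω = (1 - α) * mhat (t - 1) ω + α * X t ω) :
    ∀ t, 2 ≤ t → t ≤ N →
      ∫ ω, (mhat t ω - m t) ^ 2 ∂μ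
        = β ^ 2 * ((∫ ω, (mhat (t - 1) ω - m (t - 1)) ^ 2 ∂μ)
              + (m t - m (t - 1)) ^ 2
              + 2 * (m t - m (t - 1))
                * ∑ j ∈ Finset.Icc 2 (t - 1), β ^ (t - j) * (m j - m (j - 1)))
          + α ^ 2 * σ ^ 2 / (2 * θ)
          + 2 * α * β ^ t * γ (t - 1)
          + 2 * α ^ 2 * ∑ k ∈ Finset.Icc 1 (t - 1), β ^ k * γ k := by
  have hαβ : α + β = 1 := by rw [hβ]; ring
  have hmt' : ∀ s, 1 ≤ s → s < N → ∀ ω, mhat (s + 1) ω = β * mhat s ω + α * X (s + 1) ω :=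
    fun s _ hsN ω => hβ ▸ hmt (s + 1) (by omega) hsN ω
  have hstat : ∀ i j, 1 ≤ i → i ≤ j → j ≤ N →
      ∫ ω, (X i ω - m i) * (X j ω - m j) ∂μ = γ (j - i) := by
    intro i j hi hij hj
    rw [hcov i j hi (hij.trans hj) (hi.trans hij) hj, hγ, Nat.cast_sub hij, abs_sub_comm,
      abs_of_nonneg (sub_nonneg.2 (Nat.cast_le.2 hij))]
  intro t ht htN
  obtain ⟨s, rfl⟩ : ∃ s, t = s + 1 := ⟨t - 1, by omega⟩
  have hvar : ∫ ω, (X (s + 1) ω - m (s + 1)) ^ 2 ∂μ = σ ^ 2 / (2 * θ) := by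
    simpa [sq, hγ] using hstat (s + 1) (s + 1) (by omega) le_rfl htN
  rw [Nat.add_sub_cancel, integral_smoothing_error_succ_sq hL2 hm1 hmt' hαβ hmean (by omega) htN,
    hvar, integral_smoothing_error hL2 hm1 hmt' hαβ hmean s (by omega) (by omega)]
  linear_combination (2 * α) *
    mul_integral_smoothing_error_mul_succ hL2 hm1 hmt' hαβ hmean hstat (by omega) htN

/-- Exact recursion for the mean square error `D_t = E[(m̂_t − m*_t)²]` of the
exponential smoothing estimator applied to correlated observations with
time-varying means. -/
theorem mse_recursion
    {Ω : Type*} [MeasurableSpace Ω] (μ : Measure Ω) [IsProbabilityMeasure μ]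
    (N : ℕ) (hN : 2 ≤ N) (θ σ α β : ℝ) (hθ : 0 < θ) (hσ : 0 < σ)
    (hα : α ∈ Set.Ioo (0 : ℝ) 1) (hβ : β = 1 - α)
    (γ : ℕ → ℝ) (hγ : ∀ k, γ k = σ ^ 2 / (2 * θ) * Real.exp (-(θ / N) * (k : ℝ)))
    (X : ℕ → Ω → ℝ) (m : ℕ → ℝ)
    (hL2 : ∀ t, 1 ≤ t → t ≤ N → MemLp (X t) 2 μ)
    (hmean : ∀ t, 1 ≤ t → t ≤ N → ∫ ω, X t ω ∂μ = m t)
    (hcov : ∀ t s, 1 ≤ t → t ≤ N → 1 ≤ s → s ≤ N →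
      ∫ ω, (X t ω - m t) * (X s ω - m s) ∂μ
        = σ ^ 2 / (2 * θ) * Real.exp (-(θ / N) * |(t : ℝ) - (s : ℝ)|))
    (mhat : ℕ → Ω → ℝ)
    (hm1 : ∀ ω, mhat 1 ω = X 1 ω)
    (hmt : ∀ t, 2 ≤ t → t ≤ N → ∀ ω,
      mhat t ω = (1 - α) * mhat (t - 1) ω + α * X t ω) :
    ∀ t, 2 ≤ t → t ≤ N →
      ∫ ω, (mhat t ω - m t) ^ 2 ∂μ
        = β ^ 2 * ((∫ ω, (mhat (t - 1) ω - m (t - 1)) ^ 2 ∂μ)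
              + (m t - m (t - 1)) ^ 2
              + 2 * (m t - m (t - 1))
                * ∑ j ∈ Finset.Icc 2 (t - 1), β ^ (t - j) * (m j - m (j - 1)))
          + α ^ 2 * σ ^ 2 / (2 * θ)
          + 2 * α * β ^ t * γ (t - 1)
          + 2 * α ^ 2 * ∑ k ∈ Finset.Icc 1 (t - 1), β ^ k * γ k :=
  mse_recursion_general μ N θ σ α β hβ γ hγ X m hL2 hmean hcov mhat hm1 hmt
end

section
/- Let N ≥ 2 be an integer, θ > 0, σ > 0, α ∈ (0,1), β := 1 − α, and γ(k) := (σ²/(2θ))·e^{−(θ/N)·k}. Let X_1, …, X_N be square-integrable real random variables with E[X_t] = m*_t for real numbers m*_1, …, m*_N, and Cov(X_t, X_s) = (σ²/(2θ))·e^{−(θ/N)|t−s|} for all t, s ∈ {1,…,N}. Define m̂_1 := X_1 and m̂_t := (1−α)·m̂_{t−1} + α·X_t for t ∈ {2,…,N}. Then for every t ∈ {2,…,N}: E[(m̂_{t−1} − m*_t)·(X_t − m*_t)] = β^{t−2}·γ(t−1) + α·∑_{j=2}^{t−1} β^{t−1−j}·γ(t−j). -/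
/-!
Unrolling the smoothing recursion writes `m̂_{t-1}` as the fixed linear combination
`β^{t-2} X_1 + α ∑_{j=2}^{t-1} β^{t-1-j} X_j`. Since `X_t - m*_t` has mean zero, the constant
subtracted from `m̂_{t-1}` does not matter, so the expectation is `Cov(m̂_{t-1}, X_t)`; bilinearity
of the covariance turns it into the same combination of `Cov(X_j, X_t) = γ(t - j)`.
-/

open MeasureTheory ProbabilityTheory Finset

theorem expSmoothing_eq_weighted_sum {R : Type*} [CommRing R] {α : R} {x y : ℕ → R} {N : ℕ}
    (h1 : y 1 = x 1) (hrec : ∀ t, 2 ≤ t → t ≤ N → y t = (1 - α) * y (t - 1) + α * x t) :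
    ∀ s, 1 ≤ s → s ≤ N →
      y s = (1 - α) ^ (s - 1) * x 1 + α * ∑ j ∈ Icc 2 s, (1 - α) ^ (s - j) * x j := by
  intro s hs
  induction s, hs using Nat.le_induction with
  | base => simp [h1]
  | succ s hs ih =>
    intro hsN
    have hshift : ∑ j ∈ Icc 2 s, (1 - α) ^ (s + 1 - j) * x j
        = (1 - α) * ∑ j ∈ Icc 2 s, (1 - α) ^ (s - j) * x j := by
      rw [mul_sum]
      refine sum_congr rfl fun j hj => ?_
      rw [Nat.sub_add_comm (mem_Icc.mp hj).2, pow_succ']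
      ring
    have hpow : (1 - α) ^ s = (1 - α) * (1 - α) ^ (s - 1) := by
      rw [← pow_succ', Nat.sub_add_cancel hs]
    rw [hrec (s + 1) (by omega) hsN, Nat.add_sub_cancel, ih (by omega),
      sum_Icc_succ_top (by omega), hshift, hpow, Nat.sub_self, pow_zero]
    ring

theorem integral_sub_mul_sub_eq_covariance {Ω : Type*} [MeasurableSpace Ω] {μ : Measure Ω}
    [IsProbabilityMeasure μ] {Z Y : Ω → ℝ} (hZ : MemLp Z 2 μ) (hY : MemLp Y 2 μ)
    (c : ℝ) {d : ℝ} (hd : μ[Y] = d) :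
    ∫ ω, (Z ω - c) * (Y ω - d) ∂μ = cov[Z, Y; μ] := by
  subst hd
  have hYc : ∫ ω, (Y ω - μ[Y]) ∂μ = 0 := by
    rw [integral_sub (hY.integrable one_le_two) (integrable_const _)]
    simp
  have hsplit : ∀ ω, (Z ω - c) * (Y ω - μ[Y])
      = (Z ω - μ[Z]) * (Y ω - μ[Y]) + (μ[Z] - c) * (Y ω - μ[Y]) := fun ω => by ring
  simp_rw [hsplit]
  rw [integral_add, integral_const_mul, hYc, mul_zero, add_zero, covariance]
  · exact (hZ.sub (memLp_const _)).integrable_mul (hY.sub (memLp_const _))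
  · exact ((hY.integrable one_le_two).sub (integrable_const _)).const_mul _

theorem covariance_weighted_sum_left {Ω ι : Type*} [MeasurableSpace Ω] {μ : Measure Ω}
    [IsFiniteMeasure μ] {Z : ι → Ω → ℝ} {Y : Ω → ℝ} {s : Finset ι} {w : ι → ℝ}
    (hZ : ∀ i ∈ s, MemLp (Z i) 2 μ) (hY : MemLp Y 2 μ) :
    cov[fun ω => ∑ i ∈ s, w i * Z i ω, Y; μ] = ∑ i ∈ s, w i * cov[Z i, Y; μ] := by
  rw [covariance_fun_sum_left' (X := fun i ω => w i * Z i ω)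
    (fun i hi => (hZ i hi).const_mul _) hY]
  exact sum_congr rfl fun i _ => covariance_const_mul_left (w i)

theorem cross_covariance_estimate_observation_general
    {Ω : Type*} [MeasurableSpace Ω] (μ : Measure Ω) [IsProbabilityMeasure μ]
    (N : ℕ) (θ σ α β : ℝ)
    (hβ : β = 1 - α)
    (γ : ℕ → ℝ) (hγ : ∀ k, γ k = σ ^ 2 / (2 * θ) * Real.exp (-(θ / N) * (k : ℝ)))
    (X : ℕ → Ω → ℝ) (m : ℕ → ℝ)
    (hL2 : ∀ t, 1 ≤ t → t ≤ N → MemLp (X t) 2 μ)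
    (hmean : ∀ t, 1 ≤ t → t ≤ N → ∫ ω, X t ω ∂μ = m t)
    (hcov : ∀ t s, 1 ≤ t → t ≤ N → 1 ≤ s → s ≤ N →
      ∫ ω, (X t ω - m t) * (X s ω - m s) ∂μ
        = σ ^ 2 / (2 * θ) * Real.exp (-(θ / N) * |(t : ℝ) - (s : ℝ)|))
    (mhat : ℕ → Ω → ℝ)
    (hm1 : ∀ ω, mhat 1 ω = X 1 ω)
    (hmt : ∀ t, 2 ≤ t → t ≤ N → ∀ ω,
      mhat t ω = (1 - α) * mhat (t - 1) ω + α * X t ω) :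
    ∀ t, 2 ≤ t → t ≤ N →
      ∫ ω, (mhat (t - 1) ω - m t) * (X t ω - m t) ∂μ
        = β ^ (t - 2) * γ (t - 1)
          + α * ∑ j ∈ Finset.Icc 2 (t - 1), β ^ (t - 1 - j) * γ (t - j) := by
  subst hβ
  intro t ht2 htN
  have hsub : Icc 2 (t - 1) ⊆ Icc 1 (t - 1) := Icc_subset_Icc_left one_le_two
  have hX : ∀ j ∈ Icc 1 (t - 1), MemLp (X j) 2 μ := fun j hj =>
    hL2 j (mem_Icc.mp hj).1 (by grind)
  have hX1 : MemLp (X 1) 2 μ := hX 1 (by grind)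
  have hXt : MemLp (X t) 2 μ := hL2 t (by omega) htN
  have hcovX : ∀ j ∈ Icc 1 (t - 1), cov[X j, X t; μ] = γ (t - j) := by
    intro j hj
    obtain ⟨hj1, hjt⟩ := mem_Icc.mp hj
    have hdist : |(j : ℝ) - t| = ((t - j : ℕ) : ℝ) := by
      rw [abs_sub_comm, Nat.cast_sub (by omega), abs_of_nonneg (by simp; omega)]
    rw [covariance, hmean j hj1 (by omega), hmean t (by omega) htN,
      hcov j t hj1 (by omega) (by omega) htN, hγ, hdist]
  have hclosed : mhat (t - 1) = (fun ω => (1 - α) ^ (t - 2) * X 1 ω)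
      + fun ω => α * ∑ j ∈ Icc 2 (t - 1), (1 - α) ^ (t - 1 - j) * X j ω := by
    funext ω
    exact expSmoothing_eq_weighted_sum (x := fun j => X j ω) (y := fun s => mhat s ω) (hm1 ω)
      (fun s hs hsN => hmt s hs hsN ω) (t - 1) (by omega) (by omega)
  have hsum : MemLp (fun ω => ∑ j ∈ Icc 2 (t - 1), (1 - α) ^ (t - 1 - j) * X j ω) 2 μ :=
    memLp_finsetSum _ fun j hj => (hX j (hsub hj)).const_mul _
  rw [hclosed, integral_sub_mul_sub_eq_covariance ((hX1.const_mul _).add (hsum.const_mul _))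
      hXt (m t) (hmean t (by omega) htN),
    covariance_add_left (hX1.const_mul _) (hsum.const_mul _) hXt,
    covariance_const_mul_left, covariance_const_mul_left,
    covariance_weighted_sum_left (fun j hj => hX j (hsub hj)) hXt, hcovX 1 (by grind),
    sum_congr rfl fun j hj => by rw [hcovX j (hsub hj)]]

/-- Cross-covariance between the current exponential smoothing estimate and the
next observation:
`E[(m̂_{t−1} − m*_t)(X_t − m*_t)] = β^{t−2} γ(t−1) + α ∑_{j=2}^{t−1} β^{t−1−j} γ(t−j)`. -/
theorem cross_covariance_estimate_observation
    {Ω : Type*} [MeasurableSpace Ω] (μ : Measure Ω) [IsProbabilityMeasure μ]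
    (N : ℕ) (hN : 2 ≤ N) (θ σ α β : ℝ) (hθ : 0 < θ) (hσ : 0 < σ)
    (hα : α ∈ Set.Ioo (0 : ℝ) 1) (hβ : β = 1 - α)
    (γ : ℕ → ℝ) (hγ : ∀ k, γ k = σ ^ 2 / (2 * θ) * Real.exp (-(θ / N) * (k : ℝ)))
    (X : ℕ → Ω → ℝ) (m : ℕ → ℝ)
    (hL2 : ∀ t, 1 ≤ t → t ≤ N → MemLp (X t) 2 μ)
    (hmean : ∀ t, 1 ≤ t → t ≤ N → ∫ ω, X t ω ∂μ = m t)
    (hcov : ∀ t s, 1 ≤ t → t ≤ N → 1 ≤ s → s ≤ N →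
      ∫ ω, (X t ω - m t) * (X s ω - m s) ∂μ
        = σ ^ 2 / (2 * θ) * Real.exp (-(θ / N) * |(t : ℝ) - (s : ℝ)|))
    (mhat : ℕ → Ω → ℝ)
    (hm1 : ∀ ω, mhat 1 ω = X 1 ω)
    (hmt : ∀ t, 2 ≤ t → t ≤ N → ∀ ω,
      mhat t ω = (1 - α) * mhat (t - 1) ω + α * X t ω) :
    ∀ t, 2 ≤ t → t ≤ N →
      ∫ ω, (mhat (t - 1) ω - m t) * (X t ω - m t) ∂μ
        = β ^ (t - 2) * γ (t - 1)
          + α * ∑ j ∈ Finset.Icc 2 (t - 1), β ^ (t - 1 - j) * γ (t - j) :=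
  cross_covariance_estimate_observation_general μ N θ σ α β hβ γ hγ X m hL2 hmean hcov mhat hm1 hmt
end

section
/- Let N ≥ 2 be an integer, θ > 0, σ > 0, α ∈ (0,1), β := 1 − α, and K ≥ 0. Let X_1, …, X_N be square-integrable real random variables with means m*_1, …, m*_N satisfying |m*_t − m*_s| ≤ (K/N)·|t−s| for all t, s, with Var(X_t) = σ²/(2θ) and Cov(X_t, X_s) = (σ²/(2θ))·e^{−(θ/N)|t−s|} for all t, s ∈ {1,…,N}. Define m̂_1 := X_1, m̂_t := (1−α)·m̂_{t−1} + α·X_t, and D_t := E[(m̂_t − m*_t)²]. Set C₁ := β²·((1+β)/(1−β))·(K²/N²) + α²·(σ²/(2θ))·((e^{θ/N}+β)/(e^{θ/N}−β)), C₂ := (2/(1−β))·(K²/N²), and C₃ := α·(σ²/θ)·((e^{θ/N}−1)/(1 − β·e^{−θ/N})). Then for every t ∈ {2,…,N}: D_t ≤ β²·D_{t−1} + C₁ − C₂·β^{t+1} + C₃·(β·e^{−θ/N})^{t}. -/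
/-!
Write `e_t = m̂_t - m*_t` and `Y_t = X_t - m*_t`. The smoothing step reads
`e_t = β e_{t-1} + α Y_t + β (m*_{t-1} - m*_t)`, so expanding the square gives
`D_t = β² D_{t-1} + 2αβ E[e_{t-1} Y_t] + α² σ²/(2θ)` plus terms in the bias `E[e_{t-1}]` and the
drift `m*_{t-1} - m*_t`. The bias obeys a contracting recursion with increments at most `K/N`,
whence `|E e_s| ≤ (K/N)(β - β^s)/α`. Since the covariances are geometric in `|t - s|` with ratio
`r = e^{-θ/N}`, the cross term `E[e_s Y_t]` obeys an affine recursion in `s` and is known in closed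
form; the covariance contributions then add up exactly to the `α²` part of `C₁` plus
`C₃ (β r)^t`, and the bias contributions are at most the `K` part of `C₁` minus `C₂ β^{t+1}`.
-/

open MeasureTheory Real

section LinearCombination

variable {Ω : Type*} [MeasurableSpace Ω] {μ : Measure Ω} {f g h : Ω → ℝ}

theorem integral_mul_add_mul_add_const [IsProbabilityMeasure μ] (hf : Integrable f μ)
    (hg : Integrable g μ) (a b c : ℝ) :
    ∫ ω, (a * f ω + b * g ω + c) ∂μ = a * ∫ ω, f ω ∂μ + b * ∫ ω, g ω ∂μ + c := by
  rw [integral_add (f := fun ω => a * f ω + b * g ω) ((hf.const_mul a).add (hg.const_mul b))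
      (integrable_const c),
    integral_add (hf.const_mul a) (hg.const_mul b), integral_const_mul, integral_const_mul]
  simp

theorem integral_mul_add_mul_add_const_mul [IsFiniteMeasure μ] (hf : MemLp f 2 μ)
    (hg : MemLp g 2 μ) (hh : MemLp h 2 μ) (a b c : ℝ) :
    ∫ ω, (a * f ω + b * g ω + c) * h ω ∂μ
      = a * ∫ ω, f ω * h ω ∂μ + b * ∫ ω, g ω * h ω ∂μ + c * ∫ ω, h ω ∂μ := by
  have hfh : Integrable (fun ω => f ω * h ω) μ := hf.integrable_mul hh
  have hgh : Integrable (fun ω => g ω * h ω) μ := hg.integrable_mul hh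
  simp only [add_mul, mul_assoc]
  rw [integral_add (f := fun ω => a * (f ω * h ω) + b * (g ω * h ω))
      ((hfh.const_mul a).add (hgh.const_mul b))
      ((hh.integrable one_le_two).const_mul c),
    integral_add (hfh.const_mul a) (hgh.const_mul b), integral_const_mul, integral_const_mul,
    integral_const_mul]

theorem integral_mul_add_mul_add_const_sq [IsProbabilityMeasure μ] (hf : MemLp f 2 μ)
    (hg : MemLp g 2 μ) (a b c : ℝ) :
    ∫ ω, (a * f ω + b * g ω + c) ^ 2 ∂μ
      = a ^ 2 * ∫ ω, f ω ^ 2 ∂μ + 2 * a * b * ∫ ω, f ω * g ω ∂μ + b ^ 2 * ∫ ω, g ω ^ 2 ∂μ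
        + 2 * a * c * ∫ ω, f ω ∂μ + 2 * b * c * ∫ ω, g ω ∂μ + c ^ 2 := by
  have hmul : ∀ k : Ω → ℝ, MemLp k 2 μ → ∫ ω, k ω * (a * f ω + b * g ω + c) ∂μ
      = a * ∫ ω, f ω * k ω ∂μ + b * ∫ ω, g ω * k ω ∂μ + c * ∫ ω, k ω ∂μ := fun k hk => by
    simp only [mul_comm (k _)]
    exact integral_mul_add_mul_add_const_mul hf hg hk a b c
  have hL : MemLp (fun ω => a * f ω + b * g ω + c) 2 μ :=
    ((hf.const_mul a).add (hg.const_mul b)).add (memLp_const c)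
  simp only [sq]
  rw [integral_mul_add_mul_add_const_mul hf hg hL, hmul f hf, hmul g hg,
    integral_mul_add_mul_add_const (hf.integrable one_le_two) (hg.integrable one_le_two)]
  simp only [mul_comm (g _) (f _)]
  ring

end LinearCombination

structure SmoothingErrorRecursion {Ω : Type*} [MeasurableSpace Ω] (μ : Measure Ω) (α β : ℝ)
    (n : ℕ) (e Y : ℕ → Ω → ℝ) (δ : ℕ → ℝ) : Prop where
  memLp_noise : ∀ s, 1 ≤ s → s ≤ n → MemLp (Y s) 2 μ
  integral_noise : ∀ s, 1 ≤ s → s ≤ n → ∫ ω, Y s ω ∂μ = 0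
  init : e 1 = Y 1
  step : ∀ s, 1 ≤ s → s < n → ∀ ω, e (s + 1) ω = β * e s ω + α * Y (s + 1) ω + β * δ s

namespace SmoothingErrorRecursion

variable {Ω : Type*} [MeasurableSpace Ω] {μ : Measure Ω} {α β : ℝ} {n : ℕ}
  {e Y : ℕ → Ω → ℝ} {δ : ℕ → ℝ}

theorem of_estimator [IsProbabilityMeasure μ] {X mhat : ℕ → Ω → ℝ}
    {m : ℕ → ℝ} (hβ : β = 1 - α)
    (hL2 : ∀ t, 1 ≤ t → t ≤ n → MemLp (X t) 2 μ)
    (hmean : ∀ t, 1 ≤ t → t ≤ n → ∫ ω, X t ω ∂μ = m t)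
    (hm1 : ∀ ω, mhat 1 ω = X 1 ω)
    (hmt : ∀ t, 2 ≤ t → t ≤ n → ∀ ω, mhat t ω = (1 - α) * mhat (t - 1) ω + α * X t ω) :
    SmoothingErrorRecursion μ α β n (fun s ω => mhat s ω - m s) (fun s ω => X s ω - m s)
      (fun s => m s - m (s + 1)) where
  memLp_noise s hs hsn := (hL2 s hs hsn).sub (memLp_const _)
  integral_noise s hs hsn := by
    rw [integral_sub ((hL2 s hs hsn).integrable one_le_two) (integrable_const _),
      hmean s hs hsn, integral_const, probReal_univ, one_smul, sub_self]
  init := by simp only [hm1]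
  step s hs hsn ω := by
    rw [hmt (s + 1) (by omega) hsn ω, Nat.add_sub_cancel, hβ]
    ring

theorem memLp [IsFiniteMeasure μ] (h : SmoothingErrorRecursion μ α β n e Y δ) :
    ∀ s, 1 ≤ s → s ≤ n → MemLp (e s) 2 μ := by
  intro s hs
  induction s, hs using Nat.le_induction with
  | base => exact h.init ▸ h.memLp_noise 1 le_rfl
  | succ s hs ih =>
    intro hsn
    rw [funext (h.step s hs hsn)]
    exact (((ih (by omega)).const_mul β).add
      ((h.memLp_noise (s + 1) (by omega) hsn).const_mul α)).add (memLp_const _)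

theorem abs_integral_le [IsProbabilityMeasure μ] (h : SmoothingErrorRecursion μ α β n e Y δ)
    {L : ℝ} (hβ0 : 0 ≤ β) (hβ1 : β ≠ 1) (hδ : ∀ s, 1 ≤ s → s < n → |δ s| ≤ L) :
    ∀ s, 1 ≤ s → s ≤ n → |∫ ω, e s ω ∂μ| ≤ L * (β - β ^ s) / (1 - β) := by
  intro s hs
  induction s, hs using Nat.le_induction with
  | base => intro h1; simp [h.init, h.integral_noise 1 le_rfl h1]
  | succ s hs ih =>
    intro hsn
    have hmean : ∫ ω, e (s + 1) ω ∂μ = β * (∫ ω, e s ω ∂μ + δ s) := by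
      rw [integral_congr_ae (.of_forall (h.step s hs hsn)),
        integral_mul_add_mul_add_const ((h.memLp s hs (by omega)).integrable one_le_two)
          ((h.memLp_noise (s + 1) (by omega) hsn).integrable one_le_two),
        h.integral_noise (s + 1) (by omega) hsn]
      ring
    calc |∫ ω, e (s + 1) ω ∂μ| = β * |∫ ω, e s ω ∂μ + δ s| := by
          rw [hmean, abs_mul, abs_of_nonneg hβ0]
      _ ≤ β * (L * (β - β ^ s) / (1 - β) + L) := by
          gcongr
          exact (abs_add_le _ _).trans (add_le_add (ih (by omega)) (hδ s hs hsn))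
      _ = L * (β - β ^ (s + 1)) / (1 - β) := by
          field_simp [sub_ne_zero.2 hβ1.symm]
          ring

/-- `E[e_s Y_t] / (v r^(t-s))` solves the affine recursion `x_{s+1} = β r x_s + α`, `x_1 = 1`. -/
theorem integral_mul_noise [IsProbabilityMeasure μ] (h : SmoothingErrorRecursion μ α β n e Y δ)
    {v r : ℝ} {t : ℕ} (hβ : β = 1 - α) (hβr : β * r ≠ 1) (ht : t ≤ n)
    (hcov : ∀ s, 1 ≤ s → s ≤ t → ∫ ω, Y s ω * Y t ω ∂μ = v * r ^ (t - s)) :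
    ∀ s, 1 ≤ s → s < t → ∫ ω, e s ω * Y t ω ∂μ
      = v * r ^ (t - s) * ((α + (β * r) ^ (s - 1) * (β - β * r)) / (1 - β * r)) := by
  have hβr' : 1 - β * r ≠ 0 := sub_ne_zero.2 hβr.symm
  intro s hs
  induction s, hs using Nat.le_induction with
  | base =>
    intro h1t
    have hsum : α + (β - β * r) = 1 - β * r := by rw [hβ]; ring
    rw [h.init, hcov 1 le_rfl h1t.le, pow_zero, one_mul, hsum, div_self hβr', mul_one]
  | succ s hs ih =>
    intro hst
    rw [integral_congr_ae (.of_forall fun ω => by rw [h.step s hs (by omega) ω]),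
      integral_mul_add_mul_add_const_mul (h.memLp s hs (by omega))
        (h.memLp_noise (s + 1) (by omega) (by omega)) (h.memLp_noise t (by omega) ht),
      ih (by omega), hcov (s + 1) (by omega) hst.le, h.integral_noise t (by omega) ht]
    obtain ⟨k, rfl⟩ : ∃ k, t = s + 1 + k := ⟨t - (s + 1), by omega⟩
    obtain ⟨i, rfl⟩ : ∃ i, s = i + 1 := ⟨s - 1, by omega⟩
    rw [show i + 1 + 1 + k - (i + 1) = k + 1 by omega,
      show i + 1 + 1 + k - (i + 1 + 1) = k by omega, Nat.add_sub_cancel, Nat.add_sub_cancel]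
    field_simp
    rw [hβ]
    ring

end SmoothingErrorRecursion

theorem exp_neg_mul_abs_natCast_sub (c : ℝ) {s t : ℕ} (h : s ≤ t) :
    exp (-c * |(s : ℝ) - t|) = exp (-c) ^ (t - s) := by
  rw [abs_sub_comm, ← Nat.cast_sub h, Nat.abs_cast, ← Real.exp_nat_mul, mul_comm]

theorem covariance_terms_eq {α β v r : ℝ} {p : ℕ} (hβ : β = 1 - α) (hr : r ≠ 0)
    (hβr : β * r ≠ 1) (hp : 1 ≤ p) :
    2 * α * β * (v * r * ((α + (β * r) ^ (p - 1) * (β - β * r)) / (1 - β * r))) + α ^ 2 * v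
      = α ^ 2 * v * ((r⁻¹ + β) / (r⁻¹ - β))
        + α * (2 * v) * ((r⁻¹ - 1) / (1 - β * r)) * (β * r) ^ (p + 1) := by
  obtain ⟨k, rfl⟩ := Nat.exists_eq_add_of_le' hp
  have h1 : 1 - β * r ≠ 0 := sub_ne_zero.2 hβr.symm
  have h2 : r⁻¹ - β ≠ 0 := by
    rw [show r⁻¹ - β = (1 - β * r) / r by field_simp]
    exact div_ne_zero h1 hr
  rw [Nat.add_sub_cancel, pow_add]
  field_simp
  rw [hβ]
  ring

theorem bias_terms_le {β Δ b L : ℝ} {p : ℕ} (hβ1 : β < 1) (hΔ : |Δ| ≤ L)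
    (hb : |b| ≤ L * (β - β ^ p) / (1 - β)) :
    β ^ 2 * Δ ^ 2 + 2 * β ^ 2 * Δ * b
      ≤ β ^ 2 * ((1 + β) / (1 - β)) * L ^ 2 - 2 / (1 - β) * L ^ 2 * β ^ (p + 2) := by
  have hL : 0 ≤ L := (abs_nonneg Δ).trans hΔ
  have hsq : Δ ^ 2 ≤ L ^ 2 := sq_le_sq' (abs_le.1 hΔ).1 (abs_le.1 hΔ).2
  have hprod : Δ * b ≤ L * (L * (β - β ^ p) / (1 - β)) :=
    (le_abs_self _).trans (abs_mul Δ b ▸ mul_le_mul hΔ hb (abs_nonneg b) hL)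
  have h1β : 1 - β ≠ 0 := by linarith
  calc β ^ 2 * Δ ^ 2 + 2 * β ^ 2 * Δ * b
      ≤ β ^ 2 * L ^ 2 + 2 * β ^ 2 * (L * (L * (β - β ^ p) / (1 - β))) := by
        rw [mul_assoc (2 * β ^ 2)]; gcongr
    _ = _ := by field_simp; ring

theorem mse_recursive_inequality_general
    {Ω : Type*} [MeasurableSpace Ω] (μ : Measure Ω) [IsProbabilityMeasure μ]
    (N : ℕ) (θ σ α β K : ℝ) (hθ : 0 < θ)
    (hα : α ∈ Set.Ioo (0 : ℝ) 1) (hβ : β = 1 - α)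
    (X : ℕ → Ω → ℝ) (m : ℕ → ℝ)
    (hL2 : ∀ t, 1 ≤ t → t ≤ N → MemLp (X t) 2 μ)
    (hmean : ∀ t, 1 ≤ t → t ≤ N → ∫ ω, X t ω ∂μ = m t)
    (hcov : ∀ t s, 1 ≤ t → t ≤ N → 1 ≤ s → s ≤ N →
      ∫ ω, (X t ω - m t) * (X s ω - m s) ∂μ
        = σ ^ 2 / (2 * θ) * Real.exp (-(θ / N) * |(t : ℝ) - (s : ℝ)|))
    (hlip : ∀ t s, 1 ≤ t → t ≤ N → 1 ≤ s → s ≤ N →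
      |m t - m s| ≤ K / N * |(t : ℝ) - (s : ℝ)|)
    (mhat : ℕ → Ω → ℝ)
    (hm1 : ∀ ω, mhat 1 ω = X 1 ω)
    (hmt : ∀ t, 2 ≤ t → t ≤ N → ∀ ω,
      mhat t ω = (1 - α) * mhat (t - 1) ω + α * X t ω)
    (C₁ C₂ C₃ : ℝ)
    (hC₁ : C₁ = β ^ 2 * ((1 + β) / (1 - β)) * (K ^ 2 / (N : ℝ) ^ 2)
      + α ^ 2 * (σ ^ 2 / (2 * θ))
        * ((Real.exp (θ / N) + β) / (Real.exp (θ / N) - β)))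
    (hC₂ : C₂ = 2 / (1 - β) * (K ^ 2 / (N : ℝ) ^ 2))
    (hC₃ : C₃ = α * (σ ^ 2 / θ)
      * ((Real.exp (θ / N) - 1) / (1 - β * Real.exp (-(θ / N))))) :
    ∀ t, 2 ≤ t → t ≤ N →
      ∫ ω, (mhat t ω - m t) ^ 2 ∂μ
        ≤ β ^ 2 * (∫ ω, (mhat (t - 1) ω - m (t - 1)) ^ 2 ∂μ)
          + C₁ - C₂ * β ^ (t + 1) + C₃ * (β * Real.exp (-(θ / N))) ^ t := by
  intro t ht2 htN
  obtain ⟨p, rfl⟩ : ∃ p, t = p + 1 := ⟨t - 1, by omega⟩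
  have hp : 1 ≤ p := by omega
  have hβ0 : 0 ≤ β := by linarith [hα.2]
  have hβ1 : β < 1 := by linarith [hα.1]
  set r := exp (-(θ / N)) with hr
  have hβr : β * r ≠ 1 := (mul_lt_one_of_nonneg_of_lt_one_left hβ0 hβ1
    (exp_le_one_iff.2 (neg_nonpos.2 (by positivity)))).ne
  have hS := SmoothingErrorRecursion.of_estimator hβ hL2 hmean hm1 hmt
  have hΔ : ∀ s, 1 ≤ s → s < N → |m s - m (s + 1)| ≤ K / N := fun s hs hsN => by
    simpa using hlip s (s + 1) hs hsN.le (by omega) hsN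
  have hbias := hS.abs_integral_le hβ0 hβ1.ne hΔ p hp (by omega)
  have hcross := hS.integral_mul_noise hβ hβr htN (fun s hs hst => by
    rw [hcov s (p + 1) hs (by omega) (by omega) htN, exp_neg_mul_abs_natCast_sub _ hst]) p hp
    (by omega)
  have hvar : ∫ ω, (X (p + 1) ω - m (p + 1)) ^ 2 ∂μ = σ ^ 2 / (2 * θ) := by
    simpa [sq] using hcov (p + 1) (p + 1) (by omega) htN (by omega) htN
  have hexpand := integral_mul_add_mul_add_const_sq (hS.memLp p hp (by omega))
    (hS.memLp_noise (p + 1) (by omega) htN) β α (β * (m p - m (p + 1)))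
  simp only [← hS.step p hp (by omega)] at hexpand
  rw [hvar, hcross, hS.integral_noise _ (by omega) htN, Nat.add_sub_cancel_left,
    pow_one] at hexpand
  have hcovterms := covariance_terms_eq (v := σ ^ 2 / (2 * θ)) hβ (exp_pos _).ne' hβr hp
  have hbiasterms := bias_terms_le hβ1 (hΔ p hp (by omega)) hbias
  have hF : exp (θ / N) = r⁻¹ := by rw [hr, exp_neg, inv_inv]
  rw [hF] at hC₁ hC₃
  rw [div_pow] at hbiasterms
  rw [Nat.add_sub_cancel, hexpand, hC₁, hC₂, hC₃,
    show σ ^ 2 / θ = 2 * (σ ^ 2 / (2 * θ)) by ring]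
  linarith

/-- One-step recursive inequality for the mean square error of the exponential
smoothing estimator, with explicit constants `C₁, C₂, C₃`. -/
theorem mse_recursive_inequality
    {Ω : Type*} [MeasurableSpace Ω] (μ : Measure Ω) [IsProbabilityMeasure μ]
    (N : ℕ) (hN : 2 ≤ N) (θ σ α β K : ℝ) (hθ : 0 < θ) (hσ : 0 < σ)
    (hα : α ∈ Set.Ioo (0 : ℝ) 1) (hβ : β = 1 - α) (hK : 0 ≤ K)
    (X : ℕ → Ω → ℝ) (m : ℕ → ℝ)
    (hL2 : ∀ t, 1 ≤ t → t ≤ N → MemLp (X t) 2 μ)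
    (hmean : ∀ t, 1 ≤ t → t ≤ N → ∫ ω, X t ω ∂μ = m t)
    (hcov : ∀ t s, 1 ≤ t → t ≤ N → 1 ≤ s → s ≤ N →
      ∫ ω, (X t ω - m t) * (X s ω - m s) ∂μ
        = σ ^ 2 / (2 * θ) * Real.exp (-(θ / N) * |(t : ℝ) - (s : ℝ)|))
    (hlip : ∀ t s, 1 ≤ t → t ≤ N → 1 ≤ s → s ≤ N →
      |m t - m s| ≤ K / N * |(t : ℝ) - (s : ℝ)|)
    (mhat : ℕ → Ω → ℝ)
    (hm1 : ∀ ω, mhat 1 ω = X 1 ω)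
    (hmt : ∀ t, 2 ≤ t → t ≤ N → ∀ ω,
      mhat t ω = (1 - α) * mhat (t - 1) ω + α * X t ω)
    (C₁ C₂ C₃ : ℝ)
    (hC₁ : C₁ = β ^ 2 * ((1 + β) / (1 - β)) * (K ^ 2 / (N : ℝ) ^ 2)
      + α ^ 2 * (σ ^ 2 / (2 * θ))
        * ((Real.exp (θ / N) + β) / (Real.exp (θ / N) - β)))
    (hC₂ : C₂ = 2 / (1 - β) * (K ^ 2 / (N : ℝ) ^ 2))
    (hC₃ : C₃ = α * (σ ^ 2 / θ)
      * ((Real.exp (θ / N) - 1) / (1 - β * Real.exp (-(θ / N))))) :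
    ∀ t, 2 ≤ t → t ≤ N →
      ∫ ω, (mhat t ω - m t) ^ 2 ∂μ
        ≤ β ^ 2 * (∫ ω, (mhat (t - 1) ω - m (t - 1)) ^ 2 ∂μ)
          + C₁ - C₂ * β ^ (t + 1) + C₃ * (β * Real.exp (-(θ / N))) ^ t :=
  mse_recursive_inequality_general μ N θ σ α β K hθ hα hβ X m hL2 hmean hcov hlip mhat hm1 hmt C₁ C₂
    C₃ hC₁ hC₂ hC₃
end
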